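/- arXiv:1301.4534 — 7 statements merged into one kernel-verified Lean document; each statement's English description precedes it below -/
import Mathlib

section
/- Let F, G : ℝ → ℝ and u : ℝ² → ℝ be C^∞ functions, ε ∈ ℝ, and c1,…,c6 real constants. Define w(x,t) = c1·x + c2 + ε·(c3·t·x + c4·x + c5·t + c6). Then for all (x,t) ∈ ℝ², w_tt − F(u(x,t))·w_xx − ε·G(u(x,t))·w_t = −ε²·G(u(x,t))·(c3·x + c5). In particular the left-hand side is O(ε²), so w is a substitution exhibiting approximate nonlinear self-adjointness of the perturbed wave equation u_tt − (F(u)u_x)_x + ε·G(u)·u_t = 0 for arbitrary F and G. -/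
/-- Partial derivative with respect to the first variable `x`. -/
noncomputable def pdx (f : ℝ → ℝ → ℝ) : ℝ → ℝ → ℝ := fun x t => deriv (fun y => f y t) x

/-- Partial derivative with respect to the second variable `t`. -/
noncomputable def pdt (f : ℝ → ℝ → ℝ) : ℝ → ℝ → ℝ := fun x t => deriv (fun s => f x s) t

/-- For `w(x,t) = c1·x + c2 + ε·(c3·t·x + c4·x + c5·t + c6)`, the adjoint expression
`w_tt − F(u)·w_xx − ε·G(u)·w_t` of the perturbed wave equation
`u_tt − (F(u)u_x)_x + ε·G(u)·u_t = 0` equals `−ε²·G(u)·(c3·x + c5)`,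
exhibiting approximate nonlinear self-adjointness for arbitrary `F`, `G`. -/
theorem stmt1 (F G : ℝ → ℝ) (u : ℝ → ℝ → ℝ)
    (hF : ContDiff ℝ (⊤ : ℕ∞) F) (hG : ContDiff ℝ (⊤ : ℕ∞) G) (hu : ContDiff ℝ (⊤ : ℕ∞) (Function.uncurry u))
    (ε c1 c2 c3 c4 c5 c6 : ℝ) (w : ℝ → ℝ → ℝ)
    (hw : ∀ x t : ℝ, w x t = c1 * x + c2 + ε * (c3 * t * x + c4 * x + c5 * t + c6)) :
    ∀ x t : ℝ,
      pdt (pdt w) x t - F (u x t) * pdx (pdx w) x t - ε * G (u x t) * pdt w x t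
        = -ε ^ 2 * G (u x t) * (c3 * x + c5) := by
  have hpdt : ∀ x t : ℝ, pdt w x t = ε * (c3 * x + c5) := by
    intro x t
    have : (fun s => w x s) = fun s => c1 * x + c2 + ε * (c3 * s * x + c4 * x + c5 * s + c6) := by
      funext s; exact hw x s
    simp only [pdt, this]
    have h1 : HasDerivAt (fun s : ℝ => c1 * x + c2 + ε * (c3 * s * x + c4 * x + c5 * s + c6))
        (ε * (c3 * x + c5)) t := by
      have : HasDerivAt (fun s : ℝ => c3 * s * x + c4 * x + c5 * s + c6) (c3 * x + c5) t := by
        simpa using ((((hasDerivAt_id t).const_mul c3).mul_const x).add_const (c4*x)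
          |>.add ((hasDerivAt_id t).const_mul c5) |>.add_const c6)
      simpa using (this.const_mul ε).const_add (c1 * x + c2)
    exact h1.deriv
  have hpdx : ∀ x t : ℝ, pdx w x t = c1 + ε * (c3 * t + c4) := by
    intro x t
    have : (fun y => w y t) = fun y => c1 * y + c2 + ε * (c3 * t * y + c4 * y + c5 * t + c6) := by
      funext y; exact hw y t
    simp only [pdx, this]
    have h1 : HasDerivAt (fun y : ℝ => c1 * y + c2 + ε * (c3 * t * y + c4 * y + c5 * t + c6))
        (c1 + ε * (c3 * t + c4)) x := by
      have h2 : HasDerivAt (fun y : ℝ => c3 * t * y + c4 * y + c5 * t + c6) (c3 * t + c4) x := by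
        simpa using (((hasDerivAt_id x).const_mul (c3*t)).add ((hasDerivAt_id x).const_mul c4)
          |>.add_const (c5*t) |>.add_const c6)
      exact ((((hasDerivAt_id x).const_mul c1).add_const c2).add (h2.const_mul ε)).congr_deriv (by ring)
    exact h1.deriv
  intro x t
  have h1 : pdt (pdt w) x t = 0 := by
    have : (fun s => pdt w x s) = fun _ => ε * (c3 * x + c5) := by
      funext s; exact hpdt x s
    simp only [pdt] at this ⊢
    rw [this]; simp
  have h2 : pdx (pdx w) x t = 0 := by
    have : (fun y => pdx w y t) = fun y => c1 + ε * (c3 * t + c4) := by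
      funext y; exact hpdx y t
    simp only [pdx] at this ⊢
    rw [this]; simp
  rw [h1, h2, hpdt]
  ring
end

section
/- Let u, f, g : ℝ² → ℝ be C^∞ functions, ε, c1, c2 ∈ ℝ, and define w(x,t) = c1·u(x,t) + f(x,t) + ε·(c1·t·u(x,t) + c2·u(x,t) + g(x,t)). Then for all (x,t): w_tt − w_xx − ε·w_t = (c1 + ε·(c1·t + c2))·(u_tt − u_xx) + ε·c1·u_t + (f_tt − f_xx) + ε·(g_tt − g_xx − f_t) − ε²·(c1·u + c1·t·u_t + c2·u_t + g_t). Consequently, if f_tt = f_xx and g_tt − g_xx = f_t, then w satisfies the adjoint equation w_tt − w_xx − ε·w_t = 0 of the damped wave equation u_tt − u_xx + ε·u_t = 0 up to an O(ε²) error modulo the equation, exhibiting its approximate nonlinear self-adjointness. -/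
open scoped ContDiff


lemma one_le_inf : (∞:WithTop ℕ∞) ≠ 0 := by simp

lemma sliceT {u : ℝ → ℝ → ℝ} (hu : ContDiff ℝ ∞ (Function.uncurry u)) (x : ℝ) :
    ContDiff ℝ ∞ (fun s => u x s) :=
  hu.comp (ContDiff.prodMk contDiff_const contDiff_id)

lemma sliceX {u : ℝ → ℝ → ℝ} (hu : ContDiff ℝ ∞ (Function.uncurry u)) (t : ℝ) :
    ContDiff ℝ ∞ (fun y => u y t) :=
  hu.comp (ContDiff.prodMk contDiff_id contDiff_const)

lemma d1 {U F G : ℝ → ℝ} (hU : ContDiff ℝ ∞ U) (hF : ContDiff ℝ ∞ F) (hG : ContDiff ℝ ∞ G)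
    (a b e : ℝ) :
    deriv (fun s => a*U s + F s + e*(a*s*U s + b*U s + G s))
    = fun t => a*deriv U t + deriv F t + e*(a*(U t + t*deriv U t) + b*deriv U t + deriv G t) := by
  funext t
  have hU' := (hU.differentiable one_le_inf t).hasDerivAt
  have hF' := (hF.differentiable one_le_inf t).hasDerivAt
  have hG' := (hG.differentiable one_le_inf t).hasDerivAt
  have h1 : HasDerivAt (fun s => a*s*U s) (a*(U t + t*deriv U t)) t := by
    have := ((hasDerivAt_id t).const_mul a).mul hU'
    exact this.congr_deriv (by simp only [id_eq]; ring)
  have h : HasDerivAt (fun s => a*U s + F s + e*(a*s*U s + b*U s + G s))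
      (a*deriv U t + deriv F t + e*(a*(U t + t*deriv U t) + b*deriv U t + deriv G t)) t := by
    have := ((hU'.const_mul a).add hF').add (((h1.add (hU'.const_mul b)).add hG').const_mul e)
    exact this.congr_deriv (by ring)
  exact h.deriv

lemma d2 {U F G : ℝ → ℝ} (hU : ContDiff ℝ ∞ U) (hF : ContDiff ℝ ∞ F) (hG : ContDiff ℝ ∞ G)
    (a b e : ℝ) (t : ℝ) :
    deriv (deriv (fun s => a*U s + F s + e*(a*s*U s + b*U s + G s))) t
    = a*deriv (deriv U) t + deriv (deriv F) t
      + e*(a*(2*deriv U t + t*deriv (deriv U) t) + b*deriv (deriv U) t + deriv (deriv G) t) := by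
  rw [d1 hU hF hG a b e]
  have hU1 : ContDiff ℝ ∞ (deriv U) := (contDiff_infty_iff_deriv.mp hU).2
  have hF1 : ContDiff ℝ ∞ (deriv F) := (contDiff_infty_iff_deriv.mp hF).2
  have hG1 : ContDiff ℝ ∞ (deriv G) := (contDiff_infty_iff_deriv.mp hG).2
  have hU' := (hU1.differentiable one_le_inf t).hasDerivAt
  have hF' := (hF1.differentiable one_le_inf t).hasDerivAt
  have hG' := (hG1.differentiable one_le_inf t).hasDerivAt
  have hU0 := (hU.differentiable one_le_inf t).hasDerivAt
  have h1 : HasDerivAt (fun s => a*(U s + s*deriv U s))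
      (a*(deriv U t + (deriv U t + t*deriv (deriv U) t))) t := by
    have := (hU0.add ((hasDerivAt_id t).mul hU')).const_mul a
    exact this.congr_deriv (by simp only [id_eq]; ring)
  have h : HasDerivAt (fun s => a*deriv U s + deriv F s
        + e*(a*(U s + s*deriv U s) + b*deriv U s + deriv G s))
      (a*deriv (deriv U) t + deriv (deriv F) t
        + e*(a*(2*deriv U t + t*deriv (deriv U) t) + b*deriv (deriv U) t + deriv (deriv G) t)) t := by
    have := ((hU'.const_mul a).add hF').add (((h1.add (hU'.const_mul b)).add hG').const_mul e)
    exact this.congr_deriv (by ring)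
  exact h.deriv

lemma dx2 {P Q R : ℝ → ℝ} (hP : ContDiff ℝ ∞ P) (hQ : ContDiff ℝ ∞ Q) (hR : ContDiff ℝ ∞ R)
    (A e : ℝ) (x : ℝ) :
    deriv (deriv (fun y => A*P y + Q y + e*R y)) x
    = A*deriv (deriv P) x + deriv (deriv Q) x + e*deriv (deriv R) x := by
  have h1 : deriv (fun y => A*P y + Q y + e*R y)
      = fun y => A*deriv P y + deriv Q y + e*deriv R y := by
    funext y
    exact ((((hP.differentiable one_le_inf y).hasDerivAt.const_mul A).add
      (hQ.differentiable one_le_inf y).hasDerivAt).add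
      ((hR.differentiable one_le_inf y).hasDerivAt.const_mul e)).deriv
  rw [h1]
  have hP1 : ContDiff ℝ ∞ (deriv P) := (contDiff_infty_iff_deriv.mp hP).2
  have hQ1 : ContDiff ℝ ∞ (deriv Q) := (contDiff_infty_iff_deriv.mp hQ).2
  have hR1 : ContDiff ℝ ∞ (deriv R) := (contDiff_infty_iff_deriv.mp hR).2
  exact ((((hP1.differentiable one_le_inf x).hasDerivAt.const_mul A).add
      (hQ1.differentiable one_le_inf x).hasDerivAt).add
      ((hR1.differentiable one_le_inf x).hasDerivAt.const_mul e)).deriv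

/-- For `w = c1·u + f + ε·(c1·t·u + c2·u + g)`, the adjoint expression
`w_tt − w_xx − ε·w_t` of the damped wave equation `u_tt − u_xx + ε·u_t = 0` equals
`(c1 + ε·(c1·t + c2))·(u_tt − u_xx) + ε·c1·u_t + (f_tt − f_xx) + ε·(g_tt − g_xx − f_t)
 − ε²·(c1·u + c1·t·u_t + c2·u_t + g_t)`.  Consequently, if `f_tt = f_xx` and
`g_tt − g_xx = f_t`, the adjoint expression is the stated combination of the equation
up to an `O(ε²)` error, exhibiting approximate nonlinear self-adjointness. -/
theorem stmt2 (u f g : ℝ → ℝ → ℝ)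
    (hu : ContDiff ℝ (⊤ : ℕ∞) (Function.uncurry u)) (hf : ContDiff ℝ (⊤ : ℕ∞) (Function.uncurry f))
    (hg : ContDiff ℝ (⊤ : ℕ∞) (Function.uncurry g))
    (ε c1 c2 : ℝ) (w : ℝ → ℝ → ℝ)
    (hw : ∀ x t : ℝ,
      w x t = c1 * u x t + f x t + ε * (c1 * t * u x t + c2 * u x t + g x t)) :
    (∀ x t : ℝ,
      pdt (pdt w) x t - pdx (pdx w) x t - ε * pdt w x t
        = (c1 + ε * (c1 * t + c2)) * (pdt (pdt u) x t - pdx (pdx u) x t)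
          + ε * c1 * pdt u x t
          + (pdt (pdt f) x t - pdx (pdx f) x t)
          + ε * (pdt (pdt g) x t - pdx (pdx g) x t - pdt f x t)
          - ε ^ 2 * (c1 * u x t + c1 * t * pdt u x t + c2 * pdt u x t + pdt g x t))
    ∧ ((∀ x t : ℝ, pdt (pdt f) x t = pdx (pdx f) x t) →
       (∀ x t : ℝ, pdt (pdt g) x t - pdx (pdx g) x t = pdt f x t) →
       ∀ x t : ℝ,
        pdt (pdt w) x t - pdx (pdx w) x t - ε * pdt w x t
          = (c1 + ε * (c1 * t + c2)) * (pdt (pdt u) x t - pdx (pdx u) x t)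
            + ε * c1 * pdt u x t
            - ε ^ 2 * (c1 * u x t + c1 * t * pdt u x t + c2 * pdt u x t + pdt g x t)) := by
  have hu' : ContDiff ℝ ∞ (Function.uncurry u) := hu.of_le (by simp)
  have hf' : ContDiff ℝ ∞ (Function.uncurry f) := hf.of_le (by simp)
  have hg' : ContDiff ℝ ∞ (Function.uncurry g) := hg.of_le (by simp)
  have key : ∀ x t : ℝ,
      pdt (pdt w) x t - pdx (pdx w) x t - ε * pdt w x t
        = (c1 + ε * (c1 * t + c2)) * (pdt (pdt u) x t - pdx (pdx u) x t)
          + ε * c1 * pdt u x t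
          + (pdt (pdt f) x t - pdx (pdx f) x t)
          + ε * (pdt (pdt g) x t - pdx (pdx g) x t - pdt f x t)
          - ε ^ 2 * (c1 * u x t + c1 * t * pdt u x t + c2 * pdt u x t + pdt g x t) := by
    intro x t
    have hU : ContDiff ℝ ∞ (fun s => u x s) := sliceT hu' x
    have hF : ContDiff ℝ ∞ (fun s => f x s) := sliceT hf' x
    have hG : ContDiff ℝ ∞ (fun s => g x s) := sliceT hg' x
    have hUx : ContDiff ℝ ∞ (fun y => u y t) := sliceX hu' t
    have hFx : ContDiff ℝ ∞ (fun y => f y t) := sliceX hf' t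
    have hGx : ContDiff ℝ ∞ (fun y => g y t) := sliceX hg' t
    have hWt : (fun s => w x s)
        = fun s => c1 * (fun s => u x s) s + (fun s => f x s) s
            + ε * (c1 * s * (fun s => u x s) s + c2 * (fun s => u x s) s + (fun s => g x s) s) :=
      funext fun s => hw x s
    have hWx : (fun y => w y t)
        = fun y => (c1 + ε * (c1 * t + c2)) * (fun y => u y t) y + (fun y => f y t) y
            + ε * (fun y => g y t) y := by
      funext y; rw [hw]; ring
    show deriv (deriv (fun s => w x s)) t - deriv (deriv (fun y => w y t)) x
          - ε * deriv (fun s => w x s) t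
        = (c1 + ε * (c1 * t + c2)) * (deriv (deriv (fun s => u x s)) t
            - deriv (deriv (fun y => u y t)) x)
          + ε * c1 * deriv (fun s => u x s) t
          + (deriv (deriv (fun s => f x s)) t - deriv (deriv (fun y => f y t)) x)
          + ε * (deriv (deriv (fun s => g x s)) t - deriv (deriv (fun y => g y t)) x
            - deriv (fun s => f x s) t)
          - ε ^ 2 * (c1 * u x t + c1 * t * deriv (fun s => u x s) t
            + c2 * deriv (fun s => u x s) t + deriv (fun s => g x s) t)
    rw [hWt, hWx, d2 hU hF hG c1 c2 ε, dx2 hUx hFx hGx (c1 + ε * (c1 * t + c2)) ε,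
      d1 hU hF hG c1 c2 ε]
    simp only []
    ring
  refine ⟨key, fun hf2 hg2 x t => ?_⟩
  rw [key x t, hf2 x t, hg2 x t]
  ring
end

section
/- Let F : ℝ → ℝ and u : ℝ² → ℝ be C^∞ functions, ε ∈ ℝ, and c1,…,c8 real constants. Define w(x,t) = c1·t·x + c2·x + c3·t + c4 + ε·((1/2)·c1·t²·x + c5·t·x + c6·x + (1/2)·c3·t² + c7·t + c8). Then for all (x,t): w_tt − F(u(x,t))·w_xx − ε·w_t = −ε²·(c1·t·x + c5·x + c3·t + c7). In particular the left-hand side is O(ε²), so w exhibits approximate nonlinear self-adjointness of the perturbed wave equation u_tt + ε·u_t = (F(u)u_x)_x. -/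
/-- Derivative of a quadratic polynomial. -/
lemma dquad (A B C t : ℝ) :
    deriv (fun s : ℝ => A * s ^ 2 + B * s + C) t = 2 * A * t + B := by
  have h : HasDerivAt (fun s : ℝ => A * s ^ 2 + B * s + C)
      (A * (↑2 * t ^ (2 - 1)) + B * 1 + 0) t :=
    (((hasDerivAt_pow 2 t).const_mul A).add ((hasDerivAt_id t).const_mul B)).add
      (hasDerivAt_const t C)
  rw [h.deriv]; push_cast; ring

/-- For `w(x,t) = c1·t·x + c2·x + c3·t + c4 + ε·((1/2)c1·t²·x + c5·t·x + c6·x + (1/2)c3·t²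
+ c7·t + c8)`, the adjoint expression `w_tt − F(u)·w_xx − ε·w_t` of the perturbed wave
equation `u_tt + ε·u_t = (F(u)u_x)_x` equals `−ε²·(c1·t·x + c5·x + c3·t + c7)`,
exhibiting approximate nonlinear self-adjointness. -/
theorem stmt3 (F : ℝ → ℝ) (u : ℝ → ℝ → ℝ)
    (hF : ContDiff ℝ (⊤ : ℕ∞) F) (hu : ContDiff ℝ (⊤ : ℕ∞) (Function.uncurry u))
    (ε c1 c2 c3 c4 c5 c6 c7 c8 : ℝ) (w : ℝ → ℝ → ℝ)
    (hw : ∀ x t : ℝ,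
      w x t = c1 * t * x + c2 * x + c3 * t + c4
        + ε * ((1/2) * c1 * t ^ 2 * x + c5 * t * x + c6 * x + (1/2) * c3 * t ^ 2
            + c7 * t + c8)) :
    ∀ x t : ℝ,
      pdt (pdt w) x t - F (u x t) * pdx (pdx w) x t - ε * pdt w x t
        = -ε ^ 2 * (c1 * t * x + c5 * x + c3 * t + c7) := by
  intro x t
  have hx : ∀ t x : ℝ, pdx w x t
      = c1 * t + c2 + ε * ((1/2) * c1 * t ^ 2 + c5 * t + c6) := by
    intro t x
    unfold pdx
    have : (fun y => w y t) = fun y : ℝ =>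
        0 * y ^ 2 + (c1 * t + c2 + ε * ((1/2) * c1 * t ^ 2 + c5 * t + c6)) * y
          + (c3 * t + c4 + ε * ((1/2) * c3 * t ^ 2 + c7 * t + c8)) := by
      funext y; rw [hw]; ring
    rw [this, dquad]; ring
  have ht : ∀ x t : ℝ, pdt w x t
      = c1 * x + c3 + ε * (c1 * t * x + c5 * x + c3 * t + c7) := by
    intro x t
    unfold pdt
    have : (fun s => w x s) = fun s : ℝ =>
        (ε * ((1/2) * c1 * x + (1/2) * c3)) * s ^ 2
          + (c1 * x + c3 + ε * (c5 * x + c7)) * s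
          + (c2 * x + c4 + ε * (c6 * x + c8)) := by
      funext s; rw [hw]; ring
    rw [this, dquad]; ring
  have hxx : pdx (pdx w) x t = 0 := by
    show deriv (fun y => pdx w y t) x = 0
    have : (fun y => pdx w y t) = fun y : ℝ =>
        0 * y ^ 2 + 0 * y
          + (c1 * t + c2 + ε * ((1/2) * c1 * t ^ 2 + c5 * t + c6)) := by
      funext y; rw [hx]; ring
    rw [this, dquad]; ring
  have htt : pdt (pdt w) x t = ε * (c1 * x + c3) := by
    show deriv (fun s => pdt w x s) t = ε * (c1 * x + c3)
    have : (fun s => pdt w x s) = fun s : ℝ =>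
        0 * s ^ 2 + (ε * (c1 * x + c3)) * s
          + (c1 * x + c3 + ε * (c5 * x + c7)) := by
      funext s; rw [ht]; ring
    rw [this, dquad]; ring
  rw [hxx, htt, ht]; ring
end

section
/- Let F : ℝ → ℝ and u : ℝ² → ℝ be C^∞ functions, ε ∈ ℝ, and c1,…,c8 real constants. Define w(x,t) = c1·t·x + c2·x + c3·t + c4 + ε·(c5·x·t + c6·t − (1/6)·c1·x³ − (1/2)·c3·x² + c7·x + c8). Then for all (x,t): w_tt − F(u(x,t))·w_xx − ε·F(u(x,t))·w_t = −ε²·F(u(x,t))·(c5·x + c6). In particular the left-hand side is O(ε²), so w exhibits approximate nonlinear self-adjointness of the perturbed wave equation u_tt − (F(u)u_x)_x + ε·F(u)·u_t = 0 (the case G = F). -/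
lemma deriv_lin (a b x : ℝ) : deriv (fun y : ℝ => a * y + b) x = a := by
  simpa using (((hasDerivAt_id x).const_mul a).add_const b).deriv

lemma deriv_quad (a b c x : ℝ) :
    deriv (fun y : ℝ => a * y ^ 2 + b * y + c) x = 2 * a * x + b := by
  have h := ((((hasDerivAt_pow 2 x).const_mul a).add
    ((hasDerivAt_id x).const_mul b)).add_const c).deriv
  simp only [id_eq, Pi.add_apply] at h; rw [h]; push_cast; ring

lemma deriv_cubic (a b c d x : ℝ) :
    deriv (fun y : ℝ => a * y ^ 3 + b * y ^ 2 + c * y + d) x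
      = 3 * a * x ^ 2 + 2 * b * x + c := by
  have h := (((((hasDerivAt_pow 3 x).const_mul a).add
    ((hasDerivAt_pow 2 x).const_mul b)).add
    ((hasDerivAt_id x).const_mul c)).add_const d).deriv
  simp only [id_eq, Pi.add_apply] at h; rw [h]; push_cast; ring

/-- For `w(x,t) = c1·t·x + c2·x + c3·t + c4 + ε·(c5·x·t + c6·t − (1/6)c1·x³ − (1/2)c3·x²
+ c7·x + c8)`, the adjoint expression `w_tt − F(u)·w_xx − ε·F(u)·w_t` of the perturbed
wave equation `u_tt − (F(u)u_x)_x + ε·F(u)·u_t = 0` (the case `G = F`) equals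
`−ε²·F(u)·(c5·x + c6)`, exhibiting approximate nonlinear self-adjointness. -/
theorem stmt4 (F : ℝ → ℝ) (u : ℝ → ℝ → ℝ)
    (hF : ContDiff ℝ (⊤ : ℕ∞) F) (hu : ContDiff ℝ (⊤ : ℕ∞) (Function.uncurry u))
    (ε c1 c2 c3 c4 c5 c6 c7 c8 : ℝ) (w : ℝ → ℝ → ℝ)
    (hw : ∀ x t : ℝ,
      w x t = c1 * t * x + c2 * x + c3 * t + c4
        + ε * (c5 * x * t + c6 * t - (1/6) * c1 * x ^ 3 - (1/2) * c3 * x ^ 2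
            + c7 * x + c8)) :
    ∀ x t : ℝ,
      pdt (pdt w) x t - F (u x t) * pdx (pdx w) x t - ε * F (u x t) * pdt w x t
        = -ε ^ 2 * F (u x t) * (c5 * x + c6) := by
  -- first t-derivative
  have hpt : ∀ x t : ℝ, pdt w x t = c1 * x + c3 + ε * (c5 * x + c6) := by
    intro x t
    have : (fun s => w x s) = fun s =>
        (c1 * x + c3 + ε * (c5 * x + c6)) * s
        + (c2 * x + c4 + ε * (-(1/6) * c1 * x ^ 3 - (1/2) * c3 * x ^ 2 + c7 * x + c8)) := by
      funext s; rw [hw]; ring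
    rw [pdt, this, deriv_lin]
  -- second t-derivative
  have hptt : ∀ x t : ℝ, pdt (pdt w) x t = 0 := by
    intro x t
    have : (fun s => pdt w x s) = fun _ : ℝ => c1 * x + c3 + ε * (c5 * x + c6) := by
      funext s; exact hpt x s
    rw [pdt, this, deriv_const]
  -- first x-derivative
  have hpx : ∀ x t : ℝ, pdx w x t
      = 3 * (ε * (-(1/6) * c1)) * x ^ 2 + 2 * (ε * (-(1/2) * c3)) * x
        + (c1 * t + c2 + ε * (c5 * t + c7)) := by
    intro x t
    have : (fun y => w y t) = fun y =>
        (ε * (-(1/6) * c1)) * y ^ 3 + (ε * (-(1/2) * c3)) * y ^ 2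
        + (c1 * t + c2 + ε * (c5 * t + c7)) * y
        + (c3 * t + c4 + ε * (c6 * t + c8)) := by
      funext y; rw [hw]; ring
    rw [pdx, this, deriv_cubic]
  -- second x-derivative
  have hpxx : ∀ x t : ℝ, pdx (pdx w) x t
      = 2 * (3 * (ε * (-(1/6) * c1))) * x + 2 * (ε * (-(1/2) * c3)) := by
    intro x t
    have : (fun y => pdx w y t) = fun y =>
        (3 * (ε * (-(1/6) * c1))) * y ^ 2 + (2 * (ε * (-(1/2) * c3))) * y
        + (c1 * t + c2 + ε * (c5 * t + c7)) := by
      funext y; rw [hpx]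
    rw [pdx, this, deriv_quad]
  intro x t
  rw [hptt, hpxx, hpt]
  ring
end

section
/- Let ε ∈ ℝ and let u : ℝ² → ℝ be a C^∞ solution of the perturbed nonlinear wave equation u_tt + ε·u_t = e^u·(u_x² + u_xx) on ℝ² (i.e., u_tt + ε u_t = (e^u u_x)_x). Define T^t(x,t) = t·e^u·u_x + x·u_t + ε·((1/2)·t²·e^u·u_x − x²·u_x − x·t·u_t − 2x) and T^x(x,t) = −x·e^u·u_x − t·e^u·u_t + ε·(x²·u_t − 2t·e^u − (1/2)·t²·e^u·u_t + t·x·e^u·u_x). Then D_t(T^t) + D_x(T^x) = ε²·x·t·u_t for all (x,t); in particular (T^t, T^x) is a first-order approximate conserved vector. -/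
noncomputable def pD1 (F : ℝ × ℝ → ℝ) : ℝ × ℝ → ℝ := fun p => fderiv ℝ F p (1, 0)
noncomputable def pD2 (F : ℝ × ℝ → ℝ) : ℝ × ℝ → ℝ := fun p => fderiv ℝ F p (0, 1)

lemma hasDerivAt_pD1 {F : ℝ × ℝ → ℝ} (hF : Differentiable ℝ F) (x t : ℝ) :
    HasDerivAt (fun y => F (y, t)) (pD1 F (x, t)) x := by
  have h1 : HasDerivAt (fun y : ℝ => (y, t)) (((1 : ℝ), (0 : ℝ)) : ℝ × ℝ) x :=
    (hasDerivAt_id x).prodMk (hasDerivAt_const x t)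
  exact (hF (x, t)).hasFDerivAt.comp_hasDerivAt x h1

lemma hasDerivAt_pD2 {F : ℝ × ℝ → ℝ} (hF : Differentiable ℝ F) (x t : ℝ) :
    HasDerivAt (fun s => F (x, s)) (pD2 F (x, t)) t := by
  have h1 : HasDerivAt (fun s : ℝ => (x, s)) (((0 : ℝ), (1 : ℝ)) : ℝ × ℝ) t :=
    (hasDerivAt_const t x).prodMk (hasDerivAt_id t)
  exact (hF (x, t)).hasFDerivAt.comp_hasDerivAt t h1

lemma contDiff_pD1 {F : ℝ × ℝ → ℝ} (hF : ContDiff ℝ (⊤ : ℕ∞) F) : ContDiff ℝ (⊤ : ℕ∞) (pD1 F) :=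
  (hF.fderiv_right (by simp)).clm_apply contDiff_const

lemma contDiff_pD2 {F : ℝ × ℝ → ℝ} (hF : ContDiff ℝ (⊤ : ℕ∞) F) : ContDiff ℝ (⊤ : ℕ∞) (pD2 F) :=
  (hF.fderiv_right (by simp)).clm_apply contDiff_const

lemma pD_symm {F : ℝ × ℝ → ℝ} (hF : ContDiff ℝ (⊤ : ℕ∞) F) (p : ℝ × ℝ) :
    pD1 (pD2 F) p = pD2 (pD1 F) p := by
  have hd : ∀ q, HasFDerivAt F (fderiv ℝ F q) q := fun q =>
    (hF.differentiable (by simp) q).hasFDerivAt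
  have hd2 : HasFDerivAt (fderiv ℝ F) (fderiv ℝ (fderiv ℝ F) p) p :=
    (((hF.fderiv_right (by exact WithTop.coe_le_coe.mpr le_top)).differentiable one_ne_zero) p).hasFDerivAt
  have hsymm := second_derivative_symmetric hd hd2 ((1:ℝ),(0:ℝ)) ((0:ℝ),(1:ℝ))
  have e2 : fderiv ℝ (pD2 F) p
      = (ContinuousLinearMap.apply ℝ ℝ (((0:ℝ),(1:ℝ)) : ℝ × ℝ)).comp (fderiv ℝ (fderiv ℝ F) p) :=
    ((ContinuousLinearMap.apply ℝ ℝ (((0:ℝ),(1:ℝ)) : ℝ × ℝ)).hasFDerivAt.comp p hd2).fderiv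
  have e1 : fderiv ℝ (pD1 F) p
      = (ContinuousLinearMap.apply ℝ ℝ (((1:ℝ),(0:ℝ)) : ℝ × ℝ)).comp (fderiv ℝ (fderiv ℝ F) p) :=
    ((ContinuousLinearMap.apply ℝ ℝ (((1:ℝ),(0:ℝ)) : ℝ × ℝ)).hasFDerivAt.comp p hd2).fderiv
  show fderiv ℝ (pD2 F) p ((1:ℝ),(0:ℝ)) = fderiv ℝ (pD1 F) p ((0:ℝ),(1:ℝ))
  rw [e1, e2]
  simpa using hsymm

/-- For a solution `u` of `u_tt + ε·u_t = eᵘ(u_x² + u_xx)`, the vector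
`T^t = t·eᵘ·u_x + x·u_t + ε((1/2)t²eᵘu_x − x²u_x − xt·u_t − 2x)`,
`T^x = −x·eᵘ·u_x − t·eᵘ·u_t + ε(x²u_t − 2t·eᵘ − (1/2)t²eᵘu_t + tx·eᵘu_x)`
satisfies `D_t(T^t) + D_x(T^x) = ε²·x·t·u_t`, hence is a first-order approximate
conserved vector. -/
theorem stmt6 (ε : ℝ) (u : ℝ → ℝ → ℝ)
    (hu : ContDiff ℝ (⊤ : ℕ∞) (Function.uncurry u))
    (hpde : ∀ x t : ℝ,
      pdt (pdt u) x t + ε * pdt u x t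
        = Real.exp (u x t) * ((pdx u x t) ^ 2 + pdx (pdx u) x t))
    (Tt Tx : ℝ → ℝ → ℝ)
    (hTt : ∀ x t : ℝ,
      Tt x t = t * Real.exp (u x t) * pdx u x t + x * pdt u x t
        + ε * ((1/2) * t ^ 2 * Real.exp (u x t) * pdx u x t - x ^ 2 * pdx u x t
            - x * t * pdt u x t - 2 * x))
    (hTx : ∀ x t : ℝ,
      Tx x t = -(x * Real.exp (u x t) * pdx u x t) - t * Real.exp (u x t) * pdt u x t
        + ε * (x ^ 2 * pdt u x t - 2 * t * Real.exp (u x t)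
            - (1/2) * t ^ 2 * Real.exp (u x t) * pdt u x t
            + t * x * Real.exp (u x t) * pdx u x t)) :
    ∀ x t : ℝ, pdt Tt x t + pdx Tx x t = ε ^ 2 * x * t * pdt u x t := by
  have hFd : Differentiable ℝ (Function.uncurry u) := hu.differentiable (by simp)
  set F : ℝ × ℝ → ℝ := Function.uncurry u with hFdef
  have h1d : Differentiable ℝ (pD1 F) := (contDiff_pD1 hu).differentiable (by simp)
  have h2d : Differentiable ℝ (pD2 F) := (contDiff_pD2 hu).differentiable (by simp)
  have hux : ∀ X T : ℝ, pdx u X T = pD1 F (X, T) := fun X T =>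
    (hasDerivAt_pD1 hFd X T).deriv
  have hut : ∀ X T : ℝ, pdt u X T = pD2 F (X, T) := fun X T =>
    (hasDerivAt_pD2 hFd X T).deriv
  have huxx : ∀ X T : ℝ, pdx (pdx u) X T = pD1 (pD1 F) (X, T) := fun X T => by
    have h : (fun y => pdx u y T) = fun y => pD1 F (y, T) := funext fun y => hux y T
    show deriv (fun y => pdx u y T) X = _
    rw [h]; exact (hasDerivAt_pD1 h1d X T).deriv
  have hutt : ∀ X T : ℝ, pdt (pdt u) X T = pD2 (pD2 F) (X, T) := fun X T => by
    have h : (fun s => pdt u X s) = fun s => pD2 F (X, s) := funext fun s => hut X s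
    show deriv (fun s => pdt u X s) T = _
    rw [h]; exact (hasDerivAt_pD2 h2d X T).deriv
  intro x t
  -- component HasDerivAt facts in the t-direction
  have hU : HasDerivAt (fun s => u x s) (pD2 F (x, t)) t := hasDerivAt_pD2 hFd x t
  have hE : HasDerivAt (fun s => Real.exp (u x s)) (Real.exp (u x t) * pD2 F (x, t)) t :=
    hU.exp
  have hA : HasDerivAt (fun s => pdx u x s) (pD2 (pD1 F) (x, t)) t := by
    have h : (fun s => pdx u x s) = fun s => pD1 F (x, s) := funext fun s => hux x s
    rw [h]; exact hasDerivAt_pD2 h1d x t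
  have hB : HasDerivAt (fun s => pdt u x s) (pD2 (pD2 F) (x, t)) t := by
    have h : (fun s => pdt u x s) = fun s => pD2 F (x, s) := funext fun s => hut x s
    rw [h]; exact hasDerivAt_pD2 h2d x t
  -- component HasDerivAt facts in the x-direction
  have hU' : HasDerivAt (fun y => u y t) (pD1 F (x, t)) x := hasDerivAt_pD1 hFd x t
  have hE' : HasDerivAt (fun y => Real.exp (u y t)) (Real.exp (u x t) * pD1 F (x, t)) x :=
    hU'.exp
  have hA' : HasDerivAt (fun y => pdx u y t) (pD1 (pD1 F) (x, t)) x := by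
    have h : (fun y => pdx u y t) = fun y => pD1 F (y, t) := funext fun y => hux y t
    rw [h]; exact hasDerivAt_pD1 h1d x t
  have hB' : HasDerivAt (fun y => pdt u y t) (pD1 (pD2 F) (x, t)) x := by
    have h : (fun y => pdt u y t) = fun y => pD2 F (y, t) := funext fun y => hut y t
    rw [h]; exact hasDerivAt_pD1 h2d x t
  -- derivative of Tt in t
  have hDt : pdt Tt x t =
      Real.exp (u x t) * pdx u x t
        + t * Real.exp (u x t) * pD2 F (x, t) * pdx u x t
        + t * Real.exp (u x t) * pD2 (pD1 F) (x, t)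
        + x * pD2 (pD2 F) (x, t)
        + ε * (t * Real.exp (u x t) * pdx u x t
            + (1/2) * t ^ 2 * Real.exp (u x t) * pD2 F (x, t) * pdx u x t
            + (1/2) * t ^ 2 * Real.exp (u x t) * pD2 (pD1 F) (x, t)
            - x ^ 2 * pD2 (pD1 F) (x, t)
            - x * pdt u x t - x * t * pD2 (pD2 F) (x, t)) := by
    have hfun : (fun s => Tt x s)
        = fun s => s * Real.exp (u x s) * pdx u x s + x * pdt u x s
            + ε * ((1/2) * s ^ 2 * Real.exp (u x s) * pdx u x s - x ^ 2 * pdx u x s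
                - x * s * pdt u x s - 2 * x) := funext fun s => hTt x s
    show deriv (fun s => Tt x s) t = _
    rw [hfun]
    have H := (((hasDerivAt_id t).mul hE).mul hA |>.add (hB.const_mul x)).add
        (((((((hasDerivAt_pow 2 t).const_mul ((1:ℝ)/2)).mul hE).mul hA).sub
          (hA.const_mul (x ^ 2))).sub
          ((((hasDerivAt_id t).const_mul x)).mul hB) |>.sub
          (hasDerivAt_const t (2 * x))).const_mul ε)
    exact (H.congr_deriv (by simp only [id_eq, Pi.mul_apply]; push_cast; ring)).deriv
  -- derivative of Tx in x
  have hDx : pdx Tx x t =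
      -(Real.exp (u x t) * pdx u x t
          + x * Real.exp (u x t) * pD1 F (x, t) * pdx u x t
          + x * Real.exp (u x t) * pD1 (pD1 F) (x, t))
        - (t * Real.exp (u x t) * pD1 F (x, t) * pdt u x t
          + t * Real.exp (u x t) * pD1 (pD2 F) (x, t))
        + ε * (2 * x * pdt u x t + x ^ 2 * pD1 (pD2 F) (x, t)
            - 2 * t * Real.exp (u x t) * pD1 F (x, t)
            - (1/2) * t ^ 2 * Real.exp (u x t) * pD1 F (x, t) * pdt u x t
            - (1/2) * t ^ 2 * Real.exp (u x t) * pD1 (pD2 F) (x, t)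
            + t * Real.exp (u x t) * pdx u x t
            + t * x * Real.exp (u x t) * pD1 F (x, t) * pdx u x t
            + t * x * Real.exp (u x t) * pD1 (pD1 F) (x, t)) := by
    have hfun : (fun y => Tx y t)
        = fun y => -(y * Real.exp (u y t) * pdx u y t) - t * Real.exp (u y t) * pdt u y t
            + ε * (y ^ 2 * pdt u y t - 2 * t * Real.exp (u y t)
                - (1/2) * t ^ 2 * Real.exp (u y t) * pdt u y t
                + t * y * Real.exp (u y t) * pdx u y t) := funext fun y => hTx y t
    show deriv (fun y => Tx y t) x = _
    rw [hfun]
    have H := ((((hasDerivAt_id x).mul hE').mul hA').neg.sub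
          ((hE'.const_mul t).mul hB')).add
        (((((hasDerivAt_pow 2 x).mul hB').sub (hE'.const_mul (2 * t))).sub
          ((hE'.const_mul ((1/2) * t ^ 2)).mul hB') |>.add
          ((((hasDerivAt_id x).const_mul t).mul hE').mul hA')).const_mul ε)
    exact (H.congr_deriv (by simp only [id_eq, Pi.mul_apply]; push_cast; ring)).deriv
  have hP := hpde x t
  rw [hutt x t, hut x t, hux x t, huxx x t] at hP
  rw [hDt, hDx, hux x t, hut x t, pD_symm hu (x, t)]
  linear_combination (x - ε * x * t) * hP
end

section
/- Let ε ∈ ℝ and let u : ℝ² → ℝ be a C^∞ solution of the damped wave equation u_tt − u_xx + ε·u_t = 0 on ℝ². Define T^t = (1/2)·u_t² + (1/2)·u_x² + (1/2)·ε·(t·u_t² + u·u_t + t·u_x²) and T^x = −u_x·u_t − ε·((1/2)·u·u_x + t·u_x·u_t). Then D_t(T^t) + D_x(T^x) = −(1/2)·ε²·u_t·(u + 2t·u_t) for all (x,t); in particular (T^t, T^x) is a first-order approximate conserved vector. -/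
open Function

private lemma hasDerivAt_fst' (f : ℝ → ℝ → ℝ) (hf : Differentiable ℝ (uncurry f)) (x t : ℝ) :
    HasDerivAt (fun y => f y t) (fderiv ℝ (uncurry f) (x, t) (1, 0)) x := by
  have h := (hf (x, t)).hasFDerivAt
  have h2 : HasDerivAt (fun y : ℝ => ((y, t) : ℝ × ℝ)) ((1 : ℝ), (0 : ℝ)) x :=
    (hasDerivAt_id x).prodMk (hasDerivAt_const x t)
  exact h.comp_hasDerivAt x h2

private lemma hasDerivAt_snd' (f : ℝ → ℝ → ℝ) (hf : Differentiable ℝ (uncurry f)) (x t : ℝ) :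
    HasDerivAt (fun s => f x s) (fderiv ℝ (uncurry f) (x, t) (0, 1)) t := by
  have h := (hf (x, t)).hasFDerivAt
  have h2 : HasDerivAt (fun s : ℝ => ((x, s) : ℝ × ℝ)) ((0 : ℝ), (1 : ℝ)) t :=
    (hasDerivAt_const t x).prodMk (hasDerivAt_id t)
  exact h.comp_hasDerivAt t h2

private lemma hasDerivAt_fst (f : ℝ → ℝ → ℝ) (hf : Differentiable ℝ (uncurry f)) (x t : ℝ) :
    HasDerivAt (fun y => f y t) (pdx f x t) x := by
  have h := hasDerivAt_fst' f hf x t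
  have e : pdx f x t = fderiv ℝ (uncurry f) (x, t) (1, 0) := h.deriv
  rw [e]; exact h

private lemma hasDerivAt_snd (f : ℝ → ℝ → ℝ) (hf : Differentiable ℝ (uncurry f)) (x t : ℝ) :
    HasDerivAt (fun s => f x s) (pdt f x t) t := by
  have h := hasDerivAt_snd' f hf x t
  have e : pdt f x t = fderiv ℝ (uncurry f) (x, t) (0, 1) := h.deriv
  rw [e]; exact h

private lemma contDiff_pdx (f : ℝ → ℝ → ℝ) (hf : ContDiff ℝ (⊤ : ℕ∞) (uncurry f)) :
    Differentiable ℝ (uncurry (pdx f)) := by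
  have h : uncurry (pdx f) = fun p : ℝ × ℝ => fderiv ℝ (uncurry f) p ((1 : ℝ), (0 : ℝ)) := by
    funext p
    exact (hasDerivAt_fst' f (hf.differentiable (by simp)) p.1 p.2).deriv
  rw [h]
  exact (((hf.fderiv_right (m := (⊤ : ℕ∞)) (by simp)).clm_apply contDiff_const).differentiable (by simp))

private lemma contDiff_pdt (f : ℝ → ℝ → ℝ) (hf : ContDiff ℝ (⊤ : ℕ∞) (uncurry f)) :
    Differentiable ℝ (uncurry (pdt f)) := by
  have h : uncurry (pdt f) = fun p : ℝ × ℝ => fderiv ℝ (uncurry f) p ((0 : ℝ), (1 : ℝ)) := by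
    funext p
    exact (hasDerivAt_snd' f (hf.differentiable (by simp)) p.1 p.2).deriv
  rw [h]
  exact (((hf.fderiv_right (m := (⊤ : ℕ∞)) (by simp)).clm_apply contDiff_const).differentiable (by simp))

private lemma mixed_partials (f : ℝ → ℝ → ℝ) (hf : ContDiff ℝ (⊤ : ℕ∞) (uncurry f)) (x t : ℝ) :
    pdt (pdx f) x t = pdx (pdt f) x t := by
  set F := uncurry f
  have hdiff : ∀ y : ℝ × ℝ, HasFDerivAt F (fderiv ℝ F y) y :=
    fun y => (hf.differentiable (by simp) y).hasFDerivAt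
  have hf' : Differentiable ℝ (fderiv ℝ F) :=
    (hf.fderiv_right (m := (⊤ : ℕ∞)) (by simp)).differentiable (by simp)
  have hf'' : HasFDerivAt (fderiv ℝ F) (fderiv ℝ (fderiv ℝ F) (x, t)) (x, t) :=
    (hf' (x, t)).hasFDerivAt
  have hsymm := second_derivative_symmetric hdiff hf''
  -- pdt (pdx f) x t
  have e1 : (fun s => pdx f x s) = fun s => fderiv ℝ F (x, s) ((1 : ℝ), (0 : ℝ)) :=
    funext fun s => (hasDerivAt_fst' f (hf.differentiable (by simp)) x s).deriv
  have e2 : (fun y => pdt f y t) = fun y => fderiv ℝ F (y, t) ((0 : ℝ), (1 : ℝ)) :=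
    funext fun y => (hasDerivAt_snd' f (hf.differentiable (by simp)) y t).deriv
  have hc1 : HasDerivAt (fun s : ℝ => ((x, s) : ℝ × ℝ)) ((0 : ℝ), (1 : ℝ)) t :=
    (hasDerivAt_const t x).prodMk (hasDerivAt_id t)
  have hc2 : HasDerivAt (fun y : ℝ => ((y, t) : ℝ × ℝ)) ((1 : ℝ), (0 : ℝ)) x :=
    (hasDerivAt_id x).prodMk (hasDerivAt_const x t)
  have H1 : HasDerivAt (fun s => fderiv ℝ F (x, s)) (fderiv ℝ (fderiv ℝ F) (x, t) (0, 1)) t :=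
    hf''.comp_hasDerivAt t hc1
  have H2 : HasDerivAt (fun y => fderiv ℝ F (y, t)) (fderiv ℝ (fderiv ℝ F) (x, t) (1, 0)) x :=
    hf''.comp_hasDerivAt x hc2
  have D1 : HasDerivAt (fun s => fderiv ℝ F (x, s) ((1 : ℝ), (0 : ℝ)))
      (fderiv ℝ (fderiv ℝ F) (x, t) (0, 1) ((1 : ℝ), (0 : ℝ))) t := by
    have := H1.clm_apply (hasDerivAt_const t ((1 : ℝ), (0 : ℝ)))
    simpa using this
  have D2 : HasDerivAt (fun y => fderiv ℝ F (y, t) ((0 : ℝ), (1 : ℝ)))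
      (fderiv ℝ (fderiv ℝ F) (x, t) (1, 0) ((0 : ℝ), (1 : ℝ))) x := by
    have := H2.clm_apply (hasDerivAt_const x ((0 : ℝ), (1 : ℝ)))
    simpa using this
  have v1 : pdt (pdx f) x t = fderiv ℝ (fderiv ℝ F) (x, t) (0, 1) ((1 : ℝ), (0 : ℝ)) := by
    show deriv (fun s => pdx f x s) t = _
    rw [e1]; exact D1.deriv
  have v2 : pdx (pdt f) x t = fderiv ℝ (fderiv ℝ F) (x, t) (1, 0) ((0 : ℝ), (1 : ℝ)) := by
    show deriv (fun y => pdt f y t) x = _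
    rw [e2]; exact D2.deriv
  rw [v1, v2, hsymm]

/-- For a solution `u` of the damped wave equation `u_tt − u_xx + ε·u_t = 0`, the vector
`T^t = (1/2)u_t² + (1/2)u_x² + (1/2)ε(t·u_t² + u·u_t + t·u_x²)`,
`T^x = −u_x·u_t − ε((1/2)u·u_x + t·u_x·u_t)`
satisfies `D_t(T^t) + D_x(T^x) = −(1/2)ε²·u_t·(u + 2t·u_t)`, hence is a first-order
approximate conserved vector. -/
theorem stmt7 (ε : ℝ) (u : ℝ → ℝ → ℝ)
    (hu : ContDiff ℝ (⊤ : ℕ∞) (Function.uncurry u))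
    (hpde : ∀ x t : ℝ, pdt (pdt u) x t - pdx (pdx u) x t + ε * pdt u x t = 0)
    (Tt Tx : ℝ → ℝ → ℝ)
    (hTt : ∀ x t : ℝ,
      Tt x t = (1/2) * (pdt u x t) ^ 2 + (1/2) * (pdx u x t) ^ 2
        + (1/2) * ε * (t * (pdt u x t) ^ 2 + u x t * pdt u x t + t * (pdx u x t) ^ 2))
    (hTx : ∀ x t : ℝ,
      Tx x t = -(pdx u x t * pdt u x t)
        - ε * ((1/2) * u x t * pdx u x t + t * pdx u x t * pdt u x t)) :
    ∀ x t : ℝ,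
      pdt Tt x t + pdx Tx x t = -(1/2) * ε ^ 2 * pdt u x t * (u x t + 2 * t * pdt u x t) := by
  intro x t
  have hud : Differentiable ℝ (uncurry u) := hu.differentiable (by simp)
  have hpxd : Differentiable ℝ (uncurry (pdx u)) := contDiff_pdx u hu
  have hptd : Differentiable ℝ (uncurry (pdt u)) := contDiff_pdt u hu
  have hA : HasDerivAt (fun s => u x s) (pdt u x t) t := hasDerivAt_snd u hud x t
  have hA' : HasDerivAt (fun y => u y t) (pdx u x t) x := hasDerivAt_fst u hud x t
  have hP : HasDerivAt (fun s => pdt u x s) (pdt (pdt u) x t) t := hasDerivAt_snd _ hptd x t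
  have hQ : HasDerivAt (fun s => pdx u x s) (pdt (pdx u) x t) t := hasDerivAt_snd _ hpxd x t
  have hP' : HasDerivAt (fun y => pdt u y t) (pdx (pdt u) x t) x := hasDerivAt_fst _ hptd x t
  have hQ' : HasDerivAt (fun y => pdx u y t) (pdx (pdx u) x t) x := hasDerivAt_fst _ hpxd x t
  -- derivative of Tt in t
  have efunT : (fun s => Tt x s) = (fun s =>
      (1/2) * (pdt u x s) ^ 2 + (1/2) * (pdx u x s) ^ 2
        + (1/2) * ε * (s * (pdt u x s) ^ 2 + u x s * pdt u x s + s * (pdx u x s) ^ 2)) :=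
    funext fun s => hTt x s
  have HTt : HasDerivAt (fun s =>
      (1/2) * (pdt u x s) ^ 2 + (1/2) * (pdx u x s) ^ 2
        + (1/2) * ε * (s * (pdt u x s) ^ 2 + u x s * pdt u x s + s * (pdx u x s) ^ 2))
      ((1/2) * ((2 : ℕ) * (pdt u x t) ^ 1 * pdt (pdt u) x t)
        + (1/2) * ((2 : ℕ) * (pdx u x t) ^ 1 * pdt (pdx u) x t)
        + (1/2) * ε * ((1 * (pdt u x t) ^ 2 + t * ((2 : ℕ) * (pdt u x t) ^ 1 * pdt (pdt u) x t))
            + (pdt u x t * pdt u x t + u x t * pdt (pdt u) x t)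
            + (1 * (pdx u x t) ^ 2 + t * ((2 : ℕ) * (pdx u x t) ^ 1 * pdt (pdx u) x t)))) t := by
    exact (((hP.pow 2).const_mul (1/2)).add ((hQ.pow 2).const_mul (1/2))).add
      (((((hasDerivAt_id t).mul (hP.pow 2)).add (hA.mul hP)).add
        ((hasDerivAt_id t).mul (hQ.pow 2))).const_mul ((1/2) * ε))
  have dTt : pdt Tt x t = (1/2) * ((2 : ℕ) * (pdt u x t) ^ 1 * pdt (pdt u) x t)
        + (1/2) * ((2 : ℕ) * (pdx u x t) ^ 1 * pdt (pdx u) x t)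
        + (1/2) * ε * ((1 * (pdt u x t) ^ 2 + t * ((2 : ℕ) * (pdt u x t) ^ 1 * pdt (pdt u) x t))
            + (pdt u x t * pdt u x t + u x t * pdt (pdt u) x t)
            + (1 * (pdx u x t) ^ 2 + t * ((2 : ℕ) * (pdx u x t) ^ 1 * pdt (pdx u) x t))) := by
    show deriv (fun s => Tt x s) t = _
    rw [efunT]; exact HTt.deriv
  -- derivative of Tx in x
  have efunX : (fun y => Tx y t) = (fun y =>
      -(pdx u y t * pdt u y t)
        - ε * ((1/2) * u y t * pdx u y t + t * pdx u y t * pdt u y t)) :=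
    funext fun y => hTx y t
  have HTx : HasDerivAt (fun y =>
      -(pdx u y t * pdt u y t)
        - ε * ((1/2) * u y t * pdx u y t + t * pdx u y t * pdt u y t))
      (-(pdx (pdx u) x t * pdt u x t + pdx u x t * pdx (pdt u) x t)
        - ε * (((1/2) * pdx u x t * pdx u x t + (1/2) * u x t * pdx (pdx u) x t)
          + (t * pdx (pdx u) x t * pdt u x t + t * pdx u x t * pdx (pdt u) x t))) x := by
    exact ((hQ'.mul hP').neg).sub
      ((((hA'.const_mul (1/2)).mul hQ').add ((hQ'.const_mul t).mul hP')).const_mul ε)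
  have dTx : pdx Tx x t = -(pdx (pdx u) x t * pdt u x t + pdx u x t * pdx (pdt u) x t)
        - ε * (((1/2) * pdx u x t * pdx u x t + (1/2) * u x t * pdx (pdx u) x t)
          + (t * pdx (pdx u) x t * pdt u x t + t * pdx u x t * pdx (pdt u) x t)) := by
    show deriv (fun y => Tx y t) x = _
    rw [efunX]; exact HTx.deriv
  have hm : pdt (pdx u) x t = pdx (pdt u) x t := mixed_partials u hu x t
  have hp := hpde x t
  rw [dTt, dTx]
  push_cast
  linear_combination (pdt u x t + (1/2) * ε * u x t + ε * t * pdt u x t) * hp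
    + (pdx u x t + ε * t * pdx u x t) * hm
end

section
/- Let ε ∈ ℝ and let u : ℝ² → ℝ be a C^∞ solution of the perturbed wave equation u_tt − u_xx + ε·(u·u_t + (1/2)·t·u_t² − (1/2)·t·u_x²) = 0 on ℝ². Define T^t = −u_t − ε·((1/2)·t·u·u_t + (1/4)·u²) and T^x = u_x + (1/2)·ε·t·u·u_x. Then D_t(T^t) + D_x(T^x) = (1/2)·ε²·t·u·(u·u_t + (1/2)·t·u_t² − (1/2)·t·u_x²) for all (x,t); in particular (T^t, T^x) is a first-order approximate conserved vector. -/
lemma pdt_eq (u : ℝ → ℝ → ℝ) (hu : ContDiff ℝ (⊤ : ℕ∞) (Function.uncurry u)) (x t : ℝ) :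
    pdt u x t = fderiv ℝ (Function.uncurry u) (x, t) ((0:ℝ), (1:ℝ)) := by
  have hF := (hu.differentiable (by simp) (x, t)).hasFDerivAt
  have hc : HasDerivAt (fun s : ℝ => ((x : ℝ), s)) ((0:ℝ), (1:ℝ)) t :=
    HasDerivAt.prodMk (hasDerivAt_const t x) (hasDerivAt_id t)
  have h : HasDerivAt (fun s => u x s) (fderiv ℝ (Function.uncurry u) (x, t) ((0:ℝ),(1:ℝ))) t :=
    hF.comp_hasDerivAt t hc
  simpa [pdt] using h.deriv

lemma hasDerivAt_t (u : ℝ → ℝ → ℝ) (hu : ContDiff ℝ (⊤ : ℕ∞) (Function.uncurry u)) (x t : ℝ) :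
    HasDerivAt (fun s => u x s) (pdt u x t) t := by
  have hF := (hu.differentiable (by simp) (x, t)).hasFDerivAt
  have hc : HasDerivAt (fun s : ℝ => ((x : ℝ), s)) ((0:ℝ), (1:ℝ)) t :=
    HasDerivAt.prodMk (hasDerivAt_const t x) (hasDerivAt_id t)
  have h : HasDerivAt (fun s => u x s) (fderiv ℝ (Function.uncurry u) (x, t) ((0:ℝ),(1:ℝ))) t :=
    hF.comp_hasDerivAt t hc
  rw [pdt_eq u hu]
  exact h

lemma pdx_eq (u : ℝ → ℝ → ℝ) (hu : ContDiff ℝ (⊤ : ℕ∞) (Function.uncurry u)) (x t : ℝ) :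
    pdx u x t = fderiv ℝ (Function.uncurry u) (x, t) ((1:ℝ), (0:ℝ)) := by
  have hF := (hu.differentiable (by simp) (x, t)).hasFDerivAt
  have hc : HasDerivAt (fun y : ℝ => (y, (t : ℝ))) ((1:ℝ), (0:ℝ)) x :=
    HasDerivAt.prodMk (hasDerivAt_id x) (hasDerivAt_const x t)
  have h : HasDerivAt (fun y => u y t) (fderiv ℝ (Function.uncurry u) (x, t) ((1:ℝ),(0:ℝ))) x :=
    (hF.comp_hasDerivAt x hc :)
  simpa [pdx] using h.deriv

lemma hasDerivAt_x (u : ℝ → ℝ → ℝ) (hu : ContDiff ℝ (⊤ : ℕ∞) (Function.uncurry u)) (x t : ℝ) :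
    HasDerivAt (fun y => u y t) (pdx u x t) x := by
  have hF := (hu.differentiable (by simp) (x, t)).hasFDerivAt
  have hc : HasDerivAt (fun y : ℝ => (y, (t : ℝ))) ((1:ℝ), (0:ℝ)) x :=
    HasDerivAt.prodMk (hasDerivAt_id x) (hasDerivAt_const x t)
  have h : HasDerivAt (fun y => u y t) (fderiv ℝ (Function.uncurry u) (x, t) ((1:ℝ),(0:ℝ))) x :=
    (hF.comp_hasDerivAt x hc :)
  rw [pdx_eq u hu]
  exact h

lemma pdt_contDiff (u : ℝ → ℝ → ℝ) (hu : ContDiff ℝ (⊤ : ℕ∞) (Function.uncurry u)) :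
    ContDiff ℝ (⊤ : ℕ∞) (Function.uncurry (pdt u)) := by
  have hg : ContDiff ℝ (⊤ : ℕ∞) (fun p : ℝ × ℝ => fderiv ℝ (Function.uncurry u) p ((0:ℝ),(1:ℝ))) :=
    (hu.fderiv_right (by simp)).clm_apply contDiff_const
  convert hg using 1
  funext p
  exact pdt_eq u hu p.1 p.2

lemma pdx_contDiff (u : ℝ → ℝ → ℝ) (hu : ContDiff ℝ (⊤ : ℕ∞) (Function.uncurry u)) :
    ContDiff ℝ (⊤ : ℕ∞) (Function.uncurry (pdx u)) := by
  have hg : ContDiff ℝ (⊤ : ℕ∞) (fun p : ℝ × ℝ => fderiv ℝ (Function.uncurry u) p ((1:ℝ),(0:ℝ))) :=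
    (hu.fderiv_right (by simp)).clm_apply contDiff_const
  convert hg using 1
  funext p
  exact pdx_eq u hu p.1 p.2

/-- For a solution `u` of `u_tt − u_xx + ε(u·u_t + (1/2)t·u_t² − (1/2)t·u_x²) = 0`,
the vector `T^t = −u_t − ε((1/2)t·u·u_t + (1/4)u²)`, `T^x = u_x + (1/2)ε·t·u·u_x`
satisfies `D_t(T^t) + D_x(T^x) = (1/2)ε²·t·u·(u·u_t + (1/2)t·u_t² − (1/2)t·u_x²)`,
hence is a first-order approximate conserved vector. -/
theorem stmt8 (ε : ℝ) (u : ℝ → ℝ → ℝ)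
    (hu : ContDiff ℝ (⊤ : ℕ∞) (Function.uncurry u))
    (hpde : ∀ x t : ℝ,
      pdt (pdt u) x t - pdx (pdx u) x t
        + ε * (u x t * pdt u x t + (1/2) * t * (pdt u x t) ^ 2
            - (1/2) * t * (pdx u x t) ^ 2) = 0)
    (Tt Tx : ℝ → ℝ → ℝ)
    (hTt : ∀ x t : ℝ,
      Tt x t = -pdt u x t - ε * ((1/2) * t * u x t * pdt u x t + (1/4) * (u x t) ^ 2))
    (hTx : ∀ x t : ℝ,
      Tx x t = pdx u x t + (1/2) * ε * t * u x t * pdx u x t) :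
    ∀ x t : ℝ,
      pdt Tt x t + pdx Tx x t
        = (1/2) * ε ^ 2 * t * u x t
            * (u x t * pdt u x t + (1/2) * t * (pdt u x t) ^ 2
                - (1/2) * t * (pdx u x t) ^ 2) := by
  intro x t
  have hut := hasDerivAt_t u hu x t
  have hutt := hasDerivAt_t (pdt u) (pdt_contDiff u hu) x t
  have hux := hasDerivAt_x u hu x t
  have huxx := hasDerivAt_x (pdx u) (pdx_contDiff u hu) x t
  have hTtf : (fun s => Tt x s)
      = fun s => -pdt u x s - ε * ((1/2) * s * u x s * pdt u x s + (1/4) * (u x s) ^ 2) :=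
    funext fun s => hTt x s
  have hTxf : (fun y => Tx y t)
      = fun y => pdx u y t + (1/2) * ε * t * u y t * pdx u y t :=
    funext fun y => hTx y t
  have H1 : HasDerivAt (fun s => Tt x s)
      (-(pdt (pdt u) x t)
        - ε * (u x t * pdt u x t + (1/2) * t * (pdt u x t) ^ 2
            + (1/2) * t * u x t * pdt (pdt u) x t)) t := by
    rw [hTtf]
    have h0 : HasDerivAt (fun s : ℝ => (1/2 : ℝ) * s) (1/2) t := by
      simpa using (hasDerivAt_id t).const_mul (1/2 : ℝ)
    have h := (hutt.neg.sub ((((h0.mul hut).mul hutt).add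
      ((hut.pow 2).const_mul (1/4 : ℝ))).const_mul ε))
    refine h.congr_deriv ?_
    push_cast
    simp only [Pi.mul_apply]
    ring
  have H2 : HasDerivAt (fun y => Tx y t)
      (pdx (pdx u) x t + (1/2) * ε * t * ((pdx u x t) ^ 2 + u x t * pdx (pdx u) x t)) x := by
    rw [hTxf]
    have h := huxx.add (((hux.const_mul ((1/2 : ℝ) * ε * t)).mul huxx))
    refine h.congr_deriv ?_
    ring
  have e1 : pdt Tt x t
      = -(pdt (pdt u) x t)
        - ε * (u x t * pdt u x t + (1/2) * t * (pdt u x t) ^ 2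
            + (1/2) * t * u x t * pdt (pdt u) x t) := H1.deriv
  have e2 : pdx Tx x t
      = pdx (pdx u) x t + (1/2) * ε * t * ((pdx u x t) ^ 2 + u x t * pdx (pdx u) x t) :=
    H2.deriv
  have hp := hpde x t
  rw [e1, e2]
  linear_combination (-1 - (1/2) * ε * t * u x t) * hp
end
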